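/- For every z ≥ 0, G(z) ≤ (1/2)·(1 − exp(−(2/π) z²))^{1/2}, where G(z) = ∫_0^z (2π)^{-1/2} exp(−t²/2) dt. -/

import Mathlib

/-!
Squaring `2 G(z) √(2π) = ∫_{-z}^{z} e^{-t²/2} dt` gives the integral of the radial function
`e^{-|p|²/2}` over the square `[-z, z]²`. Replace the square by the disk of the same area,
of radius `R = 2z/√π`: the part of the square outside the disk, where the integrand is at most
`e^{-R²/2}`, and the part of the disk outside the square, where it is at least `e^{-R²/2}`,
have equal area, so the disk integral is larger. In polar coordinates the disk integral is
`2π (1 - e^{-R²/2}) = 2π (1 - e^{-(2/π) z²})`.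
-/

/-- `G(z) = ∫_0^z (2π)^{-1/2} exp(−t²/2) dt`, the integral of the standard
normal density from `0` to `z`. -/
noncomputable def G (z : ℝ) : ℝ :=
  ∫ t in (0 : ℝ)..z, (Real.sqrt (2 * Real.pi))⁻¹ * Real.exp (-t ^ 2 / 2)

open MeasureTheory Real Set

theorem intervalIntegral.integral_neg_eq_two_mul_of_even {f : ℝ → ℝ} (hf : Function.Even f)
    {a : ℝ} (hfi : IntervalIntegrable f volume 0 a) :
    ∫ x in -a..a, f x = 2 * ∫ x in 0..a, f x := by
  have hf' : (fun x ↦ f (-x)) = f := funext hf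
  have hfi' : IntervalIntegrable f volume (-a) 0 := by
    simpa [hf'] using ((IntervalIntegrable.iff_comp_neg (by simp)).mp hfi).symm
  have hleft : ∫ x in -a..0, f x = ∫ x in 0..a, f x := by
    simpa [hf'] using (intervalIntegral.integral_comp_neg (a := 0) (b := a) f).symm
  rw [← intervalIntegral.integral_add_adjacent_intervals hfi' hfi, hleft, two_mul]

section Bathtub
variable {α : Type*} [MeasurableSpace α] {μ : Measure α} {f : α → ℝ} {s t : Set α}

theorem setIntegral_le_setIntegral_of_measure_eq (hs : MeasurableSet s) (ht : MeasurableSet t)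
    (hfs : IntegrableOn f s μ) (hft : IntegrableOn f t μ) (hμ : μ s = μ t) (hμs : μ s ≠ ⊤)
    {c : ℝ} (hst : ∀ x ∈ s \ t, f x ≤ c) (hts : ∀ x ∈ t \ s, c ≤ f x) :
    ∫ x in s, f x ∂μ ≤ ∫ x in t, f x ∂μ := by
  have hμt : μ t ≠ ⊤ := hμ ▸ hμs
  have hsdiff : μ (s \ t) = μ (t \ s) := measure_sdiff_symm hs.nullMeasurableSet
    ht.nullMeasurableSet hμ (measure_ne_top_of_subset inter_subset_left hμs)
  calc ∫ x in s, f x ∂μ = ∫ x in s ∩ t, f x ∂μ + ∫ x in s \ t, f x ∂μ :=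
        (integral_inter_add_sdiff ht hfs).symm
    _ ≤ ∫ x in s ∩ t, f x ∂μ + ∫ _ in s \ t, c ∂μ := by
        refine add_le_add_right (setIntegral_mono_on (hfs.mono_set sdiff_subset)
          (integrableOn_const (measure_ne_top_of_subset sdiff_subset hμs)) (hs.diff ht) hst) _
    _ = ∫ x in t ∩ s, f x ∂μ + ∫ _ in t \ s, c ∂μ := by
        rw [inter_comm, setIntegral_const, setIntegral_const, measureReal_def, measureReal_def,
          hsdiff]
    _ ≤ ∫ x in t ∩ s, f x ∂μ + ∫ x in t \ s, f x ∂μ := by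
        refine add_le_add_right (setIntegral_mono_on
          (integrableOn_const (measure_ne_top_of_subset sdiff_subset hμt))
          (hft.mono_set sdiff_subset) (ht.diff hs) hts) _
    _ = ∫ x in t, f x ∂μ := integral_inter_add_sdiff hs hft

end Bathtub

def openDisk (R : ℝ) : Set (ℝ × ℝ) := {p | p.1 ^ 2 + p.2 ^ 2 < R ^ 2}

theorem measurableSet_openDisk (R : ℝ) : MeasurableSet (openDisk R) :=
  measurableSet_lt (by fun_prop) measurable_const

theorem mem_openDisk {R : ℝ} {p : ℝ × ℝ} : p ∈ openDisk R ↔ p.1 ^ 2 + p.2 ^ 2 < R ^ 2 := Iff.rfl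

theorem openDisk_subset_Ioo_prod {R : ℝ} (hR : 0 ≤ R) :
    openDisk R ⊆ Ioo (-R) R ×ˢ Ioo (-R) R :=
  fun p hp ↦ ⟨abs_lt.1 (abs_lt_of_sq_lt_sq (by nlinarith [sq_nonneg p.2, hp.out]) hR),
    abs_lt.1 (abs_lt_of_sq_lt_sq (by nlinarith [sq_nonneg p.1, hp.out]) hR)⟩

theorem integral_openDisk_radial {R : ℝ} (hR : 0 ≤ R) (g : ℝ → ℝ) :
    ∫ p in openDisk R, g (p.1 ^ 2 + p.2 ^ 2) = 2 * π * ∫ r in 0..R, r * g (r ^ 2) := by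
  have hpolar : ∀ p ∈ Ioi (0 : ℝ) ×ˢ Ioo (-π) π,
      p.1 • (openDisk R).indicator (fun q ↦ g (q.1 ^ 2 + q.2 ^ 2)) (polarCoord.symm p) =
        (Ioo 0 R).indicator (fun r ↦ r * g (r ^ 2)) p.1 * 1 := by
    rintro ⟨r, θ⟩ ⟨hr, -⟩
    have hnorm : (polarCoord.symm (r, θ)).1 ^ 2 + (polarCoord.symm (r, θ)).2 ^ 2 = r ^ 2 := by
      simp only [polarCoord_symm_apply]
      linear_combination r ^ 2 * cos_sq_add_sin_sq θ
    have hmem : polarCoord.symm (r, θ) ∈ openDisk R ↔ r ∈ Ioo 0 R := by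
      rw [mem_openDisk, hnorm, mem_Ioo, and_iff_right hr.out]
      exact pow_lt_pow_iff_left₀ hr.out.le hR two_ne_zero
    by_cases h : r ∈ Ioo 0 R
    · simp only [indicator_of_mem h, indicator_of_mem (hmem.2 h), hnorm, smul_eq_mul, mul_one]
    · simp only [indicator_of_notMem h, indicator_of_notMem (mt hmem.1 h), smul_zero, zero_mul]
  rw [← integral_indicator (measurableSet_openDisk R), ← integral_comp_polarCoord_symm,
    polarCoord_target, setIntegral_congr_fun (measurableSet_Ioi.prod measurableSet_Ioo) hpolar,
    Measure.volume_eq_prod, setIntegral_prod_mul _ (fun _ ↦ (1 : ℝ)),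
    setIntegral_indicator measurableSet_Ioo, Ioi_inter_Ioo, max_self,
    ← integral_Ioc_eq_integral_Ioo, ← intervalIntegral.integral_of_le hR, setIntegral_const, Real.volume_real_Ioo_of_le (by linarith [pi_pos])]
  ring

theorem volume_openDisk {R : ℝ} (hR : 0 ≤ R) :
    volume (openDisk R) = ENNReal.ofReal (π * R ^ 2) := by
  have hfin : volume (openDisk R) ≠ ⊤ := by
    refine measure_ne_top_of_subset (openDisk_subset_Ioo_prod hR) ?_
    simp [Measure.volume_eq_prod, Measure.prod_prod, ENNReal.mul_eq_top]
  have harea := integral_openDisk_radial hR (fun _ ↦ 1)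
  rw [setIntegral_const, smul_eq_mul, mul_one] at harea
  simp only [mul_one, integral_id] at harea
  rw [← ENNReal.ofReal_toReal hfin, ← measureReal_def, harea]
  congr 1
  ring

theorem integral_mul_exp_neg_sq_div_two (R : ℝ) :
    ∫ r in 0..R, r * exp (-r ^ 2 / 2) = 1 - exp (-R ^ 2 / 2) := by
  have hderiv : ∀ r ∈ uIcc 0 R,
      HasDerivAt (fun s ↦ -exp (-s ^ 2 / 2)) (r * exp (-r ^ 2 / 2)) r := fun r _ ↦
    ((hasDerivAt_pow 2 r).neg.div_const 2).exp.neg.congr_deriv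
      (by simp only [Pi.neg_apply]; push_cast; ring)
  rw [intervalIntegral.integral_eq_sub_of_hasDerivAt hderiv
    (Continuous.intervalIntegrable (by fun_prop) _ _)]
  simp only [pow_two, mul_zero, neg_zero, zero_div, exp_zero]
  ring

theorem integral_openDisk_exp_neg_normSq_div_two {R : ℝ} (hR : 0 ≤ R) :
    ∫ p in openDisk R, exp (-(p.1 ^ 2 + p.2 ^ 2) / 2) = 2 * π * (1 - exp (-R ^ 2 / 2)) := by
  rw [integral_openDisk_radial hR (fun s ↦ exp (-s / 2)), integral_mul_exp_neg_sq_div_two]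

theorem exp_neg_normSq_div_two_eq_mul (p : ℝ × ℝ) :
    exp (-(p.1 ^ 2 + p.2 ^ 2) / 2) = exp (-p.1 ^ 2 / 2) * exp (-p.2 ^ 2 / 2) := by
  rw [← exp_add]
  ring_nf

theorem integrable_exp_neg_normSq_div_two :
    Integrable fun p : ℝ × ℝ ↦ exp (-(p.1 ^ 2 + p.2 ^ 2) / 2) := by
  have h1 : Integrable fun x : ℝ ↦ exp (-x ^ 2 / 2) := by
    simpa [neg_div, div_eq_inv_mul] using integrable_exp_neg_mul_sq (b := 1 / 2) (by norm_num)
  simp_rw [exp_neg_normSq_div_two_eq_mul]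
  exact h1.mul_prod h1

theorem integral_square_exp_neg_normSq_div_two {a : ℝ} (ha : 0 ≤ a) :
    ∫ p in Ioc (-a) a ×ˢ Ioc (-a) a, exp (-(p.1 ^ 2 + p.2 ^ 2) / 2) =
      (∫ x in -a..a, exp (-x ^ 2 / 2)) ^ 2 := by
  simp_rw [exp_neg_normSq_div_two_eq_mul]
  rw [Measure.volume_eq_prod,
    setIntegral_prod_mul (fun x ↦ exp (-x ^ 2 / 2)) (fun x ↦ exp (-x ^ 2 / 2)),
    ← intervalIntegral.integral_of_le (by linarith), sq]

theorem sq_integral_exp_neg_sq_div_two_le {a : ℝ} (ha : 0 ≤ a) :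
    (∫ x in -a..a, exp (-x ^ 2 / 2)) ^ 2 ≤ 2 * π * (1 - exp (-(2 / π) * a ^ 2)) := by
  set R := 2 * a / √π
  have hR : π * R ^ 2 = (2 * a) * (2 * a) := by
    rw [div_pow, sq_sqrt pi_pos.le]
    field_simp
  have hR0 : 0 ≤ R := by positivity
  clear_value R
  have hvol : volume (Ioc (-a) a ×ˢ Ioc (-a) a) = volume (openDisk R) := by
    rw [volume_openDisk hR0, hR, Measure.volume_eq_prod, Measure.prod_prod, volume_Ioc,
      ← ENNReal.ofReal_mul (by linarith), sub_neg_eq_add, two_mul]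
  have hexp : -R ^ 2 / 2 = -(2 / π) * a ^ 2 := by
    field_simp
    linear_combination -hR
  rw [← integral_square_exp_neg_normSq_div_two ha, ← hexp,
    ← integral_openDisk_exp_neg_normSq_div_two hR0]
  exact setIntegral_le_setIntegral_of_measure_eq
    (measurableSet_Ioc.prod measurableSet_Ioc) (measurableSet_openDisk R)
    integrable_exp_neg_normSq_div_two.integrableOn integrable_exp_neg_normSq_div_two.integrableOn
    hvol (by simp [Measure.volume_eq_prod, Measure.prod_prod, ENNReal.mul_eq_top])
    (c := exp (-R ^ 2 / 2))
    (fun p hp ↦ exp_le_exp.2 (by linarith [not_lt.1 (mt mem_openDisk.2 hp.2)]))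
    (fun p hp ↦ exp_le_exp.2 (by linarith [mem_openDisk.1 hp.1]))

/-- Pólya's inequality: for `z ≥ 0`, `G(z) ≤ (1/2)·(1 − exp(−(2/π) z²))^{1/2}`. -/
theorem polya_inequality (z : ℝ) (hz : 0 ≤ z) :
    G z ≤ (1 / 2) * (1 - Real.exp (-(2 / Real.pi) * z ^ 2)) ^ ((1 : ℝ) / 2) := by
  have hG : G z = (∫ x in -z..z, exp (-x ^ 2 / 2)) / (2 * √(2 * π)) := by
    rw [G, intervalIntegral.integral_const_mul,
      intervalIntegral.integral_neg_eq_two_mul_of_even (fun x ↦ by simp)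
      (Continuous.intervalIntegrable (by fun_prop) _ _)]
    field_simp
  rw [← sqrt_eq_rpow, hG]
  calc _ ≤ √(2 * π * (1 - exp (-(2 / π) * z ^ 2))) / (2 * √(2 * π)) := by
        gcongr
        exact le_sqrt_of_sq_le (sq_integral_exp_neg_sq_div_two_le hz)
    _ = (1 / 2) * √(1 - exp (-(2 / π) * z ^ 2)) := by
        rw [sqrt_mul (by positivity)]
        field_simp
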